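/- Let a > 0 and β > 0, define errfn(z) := (1/(2π)) ∫_{-∞}^z e^{-ξ²} dξ and e_{a,β}(y,t) := errfn((y + a t)/√(4βt)) - errfn((y - a t)/√(4βt)). Then there exist C > 0 and M > 0 such that for all y ≤ 0 and all t ≥ 1, |∂_t e_{a,β}(y,t)| ≤ C t^{-1/2} exp(-(y + a t)²/(M t)). -/

import Mathlib

open MeasureTheory Real Set

/-- The error function `errfn(z) = (1/(2π)) ∫_{-∞}^z e^{-ξ²} dξ`. -/
noncomputable def errfn (z : ℝ) : ℝ := (1 / (2 * Real.pi)) * ∫ ξ in Iic z, Real.exp (-ξ^2)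

/-- The scattered error-function kernel
`e_{a,β}(y,t) = errfn((y+at)/√(4βt)) - errfn((y-at)/√(4βt))`. -/
noncomputable def eKernel (a β y t : ℝ) : ℝ :=
  errfn ((y + a * t) / Real.sqrt (4 * β * t)) - errfn ((y - a * t) / Real.sqrt (4 * β * t))

/-!
With `s = √(4βt)` and `u± = (y ± at)/s`, one has `∂_t u± = ±a/s - u±/(2t)`, so
`∂_t e = (2π)⁻¹ (e^{-u₊²}(a/s - u₊/(2t)) + e^{-u₋²}(a/s + u₋/(2t)))`.
For `y ≤ 0` we have `u₊² ≤ u₋²`; together with `|u| e^{-u²} ≤ e^{-u²/2}` every term is bounded by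
`e^{-u₊²/2} = exp(-(y+at)²/(8βt))`, with prefactor `2a/s + 1/t ≲ t^{-1/2}` for `t ≥ 1`.
-/

theorem hasDerivAt_integral_Iic {f : ℝ → ℝ} (hf : Continuous f) (hfi : Integrable f) (z : ℝ) :
    HasDerivAt (fun w => ∫ ξ in Iic w, f ξ) (f z) z := by
  have hsplit : (fun w => ∫ ξ in Iic w, f ξ) =
      fun w => (∫ ξ in Iic (0 : ℝ), f ξ) + ∫ ξ in (0 : ℝ)..w, f ξ := by
    ext w
    rw [← intervalIntegral.integral_Iic_sub_Iic hfi.integrableOn hfi.integrableOn]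
    ring
  rw [hsplit]
  exact (intervalIntegral.integral_hasDerivAt_right (hf.intervalIntegrable _ _)
    hf.aestronglyMeasurable.stronglyMeasurableAtFilter hf.continuousAt).const_add _

theorem hasDerivAt_errfn (z : ℝ) :
    HasDerivAt errfn (1 / (2 * π) * exp (-z ^ 2)) z := by
  have hgauss : Integrable fun ξ : ℝ => exp (-ξ ^ 2) := by
    simpa using integrable_exp_neg_mul_sq (b := 1) one_pos
  exact (hasDerivAt_integral_Iic (by fun_prop) hgauss z).const_mul _

theorem hasDerivAt_add_mul_div_sqrt (c y : ℝ) {β t : ℝ} (hβ : 0 < β) (ht : 0 < t) :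
    HasDerivAt (fun t' => (y + c * t') / √(4 * β * t'))
      (c / √(4 * β * t) - (y + c * t) / √(4 * β * t) / (2 * t)) t := by
  have h4βt : 0 < 4 * β * t := by positivity
  have hS : 0 < √(4 * β * t) := sqrt_pos.mpr h4βt
  have hlin : HasDerivAt (fun t' => 4 * β * t') (4 * β) t := by
    simpa using (hasDerivAt_id t).const_mul (4 * β)
  have hnum : HasDerivAt (fun t' => y + c * t') c t := by
    simpa using ((hasDerivAt_id t).const_mul c).const_add y
  refine (hnum.div (hlin.sqrt h4βt.ne') hS.ne').congr_deriv ?_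
  field_simp
  rw [sq_sqrt h4βt.le]
  ring

theorem hasDerivAt_eKernel (a y : ℝ) {β t : ℝ} (hβ : 0 < β) (ht : 0 < t) :
    HasDerivAt (fun t' => eKernel a β y t')
      (1 / (2 * π) *
        (exp (-((y + a * t) / √(4 * β * t)) ^ 2) *
            (a / √(4 * β * t) - (y + a * t) / √(4 * β * t) / (2 * t)) +
          exp (-((y - a * t) / √(4 * β * t)) ^ 2) *
            (a / √(4 * β * t) + (y - a * t) / √(4 * β * t) / (2 * t)))) t := by
  have hplus := (hasDerivAt_errfn _).comp t (hasDerivAt_add_mul_div_sqrt a y hβ ht)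
  have hminus := (hasDerivAt_errfn _).comp t (hasDerivAt_add_mul_div_sqrt (-a) y hβ ht)
  simp only [neg_mul, ← sub_eq_add_neg] at hminus
  exact (hplus.sub hminus).congr_deriv (by ring)

theorem abs_mul_exp_neg_sq_le (z : ℝ) : |z| * exp (-z ^ 2) ≤ exp (-z ^ 2 / 2) := by
  have hz : |z| ≤ exp (z ^ 2 / 2) := by
    nlinarith [add_one_le_exp (z ^ 2 / 2), sq_nonneg (|z| - 1), sq_abs z]
  calc |z| * exp (-z ^ 2) ≤ exp (z ^ 2 / 2) * exp (-z ^ 2) := by gcongr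
    _ = exp (-z ^ 2 / 2) := by rw [← exp_add]; ring_nf

theorem abs_exp_mul_add_exp_mul_le {u v p r : ℝ} (huv : u ^ 2 ≤ v ^ 2) (hp : 0 ≤ p)
    (hr : 0 < r) :
    |exp (-u ^ 2) * (p - u / r) + exp (-v ^ 2) * (p + v / r)| ≤
      2 * (p + 1 / r) * exp (-u ^ 2 / 2) := by
  have hexp_u : exp (-u ^ 2) ≤ exp (-u ^ 2 / 2) := exp_le_exp.mpr (by linarith [sq_nonneg u])
  have hexp_v : exp (-v ^ 2) ≤ exp (-u ^ 2 / 2) := exp_le_exp.mpr (by linarith [sq_nonneg u])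
  have hu := abs_mul_exp_neg_sq_le u
  have hv : |v| * exp (-v ^ 2) ≤ exp (-u ^ 2 / 2) :=
    (abs_mul_exp_neg_sq_le v).trans (exp_le_exp.mpr (by linarith))
  have hterm : ∀ w, |exp (-w ^ 2) * (p + w / r)| ≤ exp (-w ^ 2) * p + |w| * exp (-w ^ 2) / r := by
    intro w
    have hpq : |p + w / r| ≤ p + |w| / r := by
      simpa [abs_div, abs_of_nonneg hp, abs_of_pos hr] using abs_add_le p (w / r)
    rw [abs_mul, abs_of_pos (exp_pos _)]
    calc exp (-w ^ 2) * |p + w / r| ≤ exp (-w ^ 2) * (p + |w| / r) := by gcongr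
      _ = exp (-w ^ 2) * p + |w| * exp (-w ^ 2) / r := by ring
  have hterm_u := hterm (-u)
  rw [neg_sq, abs_neg, neg_div, ← sub_eq_add_neg] at hterm_u
  calc |exp (-u ^ 2) * (p - u / r) + exp (-v ^ 2) * (p + v / r)|
      ≤ exp (-u ^ 2) * p + |u| * exp (-u ^ 2) / r +
          (exp (-v ^ 2) * p + |v| * exp (-v ^ 2) / r) :=
        (abs_add_le _ _).trans (add_le_add hterm_u (hterm v))
    _ ≤ exp (-u ^ 2 / 2) * p + exp (-u ^ 2 / 2) / r +
          (exp (-u ^ 2 / 2) * p + exp (-u ^ 2 / 2) / r) := by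
        gcongr
    _ = 2 * (p + 1 / r) * exp (-u ^ 2 / 2) := by ring

theorem two_mul_div_sqrt_add_inv_le (a : ℝ) {β t : ℝ} (ha : 0 ≤ a) (hβ : 0 < β) (ht : 1 ≤ t) :
    2 * (a / √(4 * β * t) + 1 / (2 * t)) ≤ (a / √β + 1) * t ^ (-(1 : ℝ) / 2) := by
  have ht0 : 0 < t := one_pos.trans_le ht
  have hsqrt_t : 0 < √t := sqrt_pos.mpr ht0
  have hrpow : t ^ (-(1 : ℝ) / 2) = 1 / √t := by
    rw [neg_div, rpow_neg ht0.le, sqrt_eq_rpow, inv_eq_one_div]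
  have hsqrt_split : √(4 * β * t) = 2 * √β * √t := by
    rw [sqrt_mul (by positivity), sqrt_mul (by norm_num), show (4 : ℝ) = 2 ^ 2 by norm_num,
      sqrt_sq zero_le_two]
  have hinv_t : 1 / t ≤ 1 / √t :=
    one_div_le_one_div_of_le hsqrt_t (sqrt_le_self_iff.mpr (Or.inr ht))
  rw [hrpow, hsqrt_split]
  calc 2 * (a / (2 * √β * √t) + 1 / (2 * t)) = a / √β * (1 / √t) + 1 / t := by
        field_simp
    _ ≤ a / √β * (1 / √t) + 1 / √t := by gcongr
    _ = (a / √β + 1) * (1 / √t) := by ring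

theorem eKernel_deriv_t_bound (a β : ℝ) (ha : 0 < a) (hβ : 0 < β) :
    ∃ C M : ℝ, 0 < C ∧ 0 < M ∧ ∀ y : ℝ, y ≤ 0 → ∀ t : ℝ, 1 ≤ t →
      |deriv (fun t' => eKernel a β y t') t|
        ≤ C * t ^ (-(1:ℝ)/2) * Real.exp (-(y + a * t)^2 / (M * t)) := by
  refine ⟨1 / (2 * π) * (a / √β + 1), 8 * β, by positivity, by positivity, fun y hy t ht => ?_⟩
  have ht0 : 0 < t := one_pos.trans_le ht
  have h4βt : 0 < 4 * β * t := by positivity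
  have hsq_le : ((y + a * t) / √(4 * β * t)) ^ 2 ≤ ((y - a * t) / √(4 * β * t)) ^ 2 := by
    rw [div_pow, div_pow]
    refine div_le_div_of_nonneg_right ?_ (sq_nonneg _)
    nlinarith [mul_nonneg (mul_nonneg (neg_nonneg.mpr hy) ha.le) ht0.le]
  have hexponent : -((y + a * t) / √(4 * β * t)) ^ 2 / 2 = -(y + a * t) ^ 2 / (8 * β * t) := by
    rw [div_pow, sq_sqrt h4βt.le]
    ring
  rw [(hasDerivAt_eKernel a y hβ ht0).deriv, abs_mul, abs_of_pos (by positivity), ← hexponent]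
  calc _ ≤ 1 / (2 * π) * (2 * (a / √(4 * β * t) + 1 / (2 * t)) *
        exp (-((y + a * t) / √(4 * β * t)) ^ 2 / 2)) := by
        gcongr
        exact abs_exp_mul_add_exp_mul_le hsq_le (by positivity) (by positivity)
    _ ≤ 1 / (2 * π) * ((a / √β + 1) * t ^ (-(1 : ℝ) / 2) *
        exp (-((y + a * t) / √(4 * β * t)) ^ 2 / 2)) := by
        gcongr _ * (?_ * _)
        exact two_mul_div_sqrt_add_inv_le a ha.le hβ ht
    _ = _ := by ring
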